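/- Define β(x) = −(∫₀^∞ z f(z) dz)² + 2(∫₀ˣ f(z) dz)(∫₀ˣ z² f(z) dz) + 4x(∫₀ˣ f(z) dz)(∫ₓ^∞ z f(z) dz) − x²/4 + (∫ₓ^∞ z f(z) dz)² + x²(∫₀ˣ f(z) dz)². Then β(0) = 0, and for x ≥ 0 the derivative of β is β′(x) = 4(∫₀ˣ f(z) dz)(∫ₓ^∞ z f(z) dz) − x/2 + 2x(∫₀ˣ f(z) dz)² + 2f(x) ∫₀ˣ z² f(z) dz + 2x f(x) ∫ₓ^∞ z f(z) dz; consequently β(x) ≥ 0 for all x ≥ 0. -/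

import Mathlib

/-!
Write `F = ∫₀ˣ f`, `G = ∫₀ˣ z² f`, `H = ∫ₓ^∞ z f` and `p = ∫ₓ^∞ f`; by symmetry `p = 1/2 - F`.
The formula for `β′` is the fundamental theorem of calculus, and `β′ ≥ 0` on `[0, ∞)` then
follows from `x f(x) ≤ F`, `x p ≤ H` and the tail inequality `p² ≤ 2 f(x) (H - x p)`, which holds
for every nonnegative function that is nonincreasing on `[x, ∞)`: among such functions with
given mass and value at `x`, the first moment about `x` is smallest for the box of height `f(x)`.
As `β 0 = 0`, `β` is nonnegative on `[0, ∞)`.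
-/

open MeasureTheory Set

theorem integrable_mul_of_integrable_sq_mul {μ : Measure ℝ} {f : ℝ → ℝ} (hf : Integrable f μ)
    (hf₂ : Integrable (fun z => z ^ 2 * f z) μ) : Integrable (fun z => z * f z) μ := by
  refine (hf.add hf₂).mono (continuous_id.aestronglyMeasurable.mul hf.1) (ae_of_all _ fun z => ?_)
  have hz : |z| ≤ 1 + z ^ 2 := by nlinarith [sq_abs z, sq_nonneg (|z| - 1)]
  calc ‖z * f z‖ = |z| * |f z| := by rw [Real.norm_eq_abs, abs_mul]
    _ ≤ (1 + z ^ 2) * |f z| := by gcongr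
    _ = ‖f z + z ^ 2 * f z‖ := by
      have h1z : (0 : ℝ) ≤ 1 + z ^ 2 := by positivity
      rw [Real.norm_eq_abs, ← one_add_mul, abs_mul, abs_of_nonneg h1z]

theorem sq_setIntegral_Ioi_le_of_antitoneOn {g : ℝ → ℝ} {a : ℝ}
    (hg_nonneg : ∀ z ∈ Ici a, 0 ≤ g z) (hg_anti : AntitoneOn g (Ici a))
    (hg_int : IntegrableOn g (Ioi a)) (hg_mom : IntegrableOn (fun z => (z - a) * g z) (Ioi a)) :
    (∫ z in Ioi a, g z) ^ 2 ≤ 2 * g a * ∫ z in Ioi a, (z - a) * g z := by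
  set P := ∫ z in Ioi a, g z
  rcases (hg_nonneg a self_mem_Ici).eq_or_lt with hga | hga
  · have hP : P = 0 := setIntegral_eq_zero_of_forall_eq_zero fun z hz =>
      le_antisymm (hga ▸ hg_anti self_mem_Ici (Ioi_subset_Ici_self hz) hz.le)
        (hg_nonneg z (Ioi_subset_Ici_self hz))
    simp [hP, ← hga]
  -- `(z - (a + c)) * (g z - g a * 𝟙_{(a, a + c]} z) ≥ 0` pointwise, and the box
  -- `g a * 𝟙_{(a, a + c]}` has the same mass `P` as `g`
  set c := P / g a
  have hc : 0 ≤ c := div_nonneg (setIntegral_nonneg measurableSet_Ioi fun z hz =>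
    hg_nonneg z (Ioi_subset_Ici_self hz)) hga.le
  have hcP : c * g a = P := div_mul_cancel₀ P hga.ne'
  set box := (Ioc a (a + c)).indicator fun z => (z - (a + c)) * g a
  have hbox : ∫ z in Ioi a, box z = -(g a * c ^ 2 / 2) := by
    rw [setIntegral_indicator measurableSet_Ioc,
      inter_eq_self_of_subset_right Ioc_subset_Ioi_self,
      ← intervalIntegral.integral_of_le (by linarith), intervalIntegral.integral_mul_const,
      intervalIntegral.integral_comp_sub_right fun z => z]
    simp only [sub_self, integral_id]
    ring
  have hcmp : ∫ z in Ioi a, box z ≤ ∫ z in Ioi a, ((z - a) * g z - c * g z) := by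
    refine setIntegral_mono_on ((Continuous.integrableOn_Ioc (by fun_prop)).integrable_indicator
      measurableSet_Ioc).integrableOn (hg_mom.sub (hg_int.const_mul c)) measurableSet_Ioi
      fun z hz => ?_
    have hgz := hg_nonneg z (Ioi_subset_Ici_self hz)
    by_cases hzc : z ≤ a + c
    · have := hg_anti self_mem_Ici (Ioi_subset_Ici_self hz) (le_of_lt hz)
      simp only [box, indicator_of_mem (show z ∈ Ioc a (a + c) from ⟨hz, hzc⟩)]
      nlinarith
    · simp only [box, indicator_of_notMem (fun h : z ∈ Ioc a (a + c) => hzc h.2)]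
      nlinarith
  rw [hbox, integral_sub hg_mom (hg_int.const_mul c), integral_const_mul] at hcmp
  nlinarith

theorem hasDerivAt_setIntegral_Ioi {g : ℝ → ℝ} (hg : Continuous g) (hg_int : Integrable g)
    (x : ℝ) : HasDerivAt (fun u => ∫ z in Ioi u, g z) (-g x) x := by
  have hsplit : (fun u => ∫ z in Ioi u, g z) = fun u => (∫ z in Ioi 0, g z) - ∫ z in 0..u, g z := by
    funext u
    rw [← intervalIntegral.integral_interval_add_Ioi' (hg.intervalIntegrable 0 u)
      hg_int.integrableOn]
    ring
  rw [hsplit]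
  exact (hg.integral_hasStrictDerivAt 0 x).hasDerivAt.const_sub _

theorem Function.Even.setIntegral_Ioi_zero {g : ℝ → ℝ} (hg : Function.Even g)
    (hg_int : Integrable g) : ∫ z in Ioi 0, g z = (∫ z, g z) / 2 := by
  have hneg : ∫ z in Ioi 0, g z = ∫ z in Iic 0, g z := by
    simpa only [hg _, neg_zero] using integral_comp_neg_Ioi 0 g
  rw [← intervalIntegral.integral_Iic_add_Ioi hg_int.integrableOn hg_int.integrableOn, ← hneg]
  ring

section Beta

variable {f : ℝ → ℝ}

noncomputable def beta (f : ℝ → ℝ) (x : ℝ) : ℝ :=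
  -(∫ z in Ioi (0:ℝ), z * f z) ^ 2
    + 2 * (∫ z in (0:ℝ)..x, f z) * (∫ z in (0:ℝ)..x, z ^ 2 * f z)
    + 4 * x * (∫ z in (0:ℝ)..x, f z) * (∫ z in Ioi x, z * f z)
    - x ^ 2 / 4
    + (∫ z in Ioi x, z * f z) ^ 2
    + x ^ 2 * (∫ z in (0:ℝ)..x, f z) ^ 2

noncomputable def betaDeriv (f : ℝ → ℝ) (x : ℝ) : ℝ :=
  4 * (∫ z in (0:ℝ)..x, f z) * (∫ z in Ioi x, z * f z)
    - x / 2 + 2 * x * (∫ z in (0:ℝ)..x, f z) ^ 2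
    + 2 * f x * (∫ z in (0:ℝ)..x, z ^ 2 * f z)
    + 2 * x * f x * (∫ z in Ioi x, z * f z)

theorem beta_zero : beta f 0 = 0 := by
  simp [beta]

theorem hasDerivAt_beta (hf : Continuous f) (hf₁ : Integrable fun z => z * f z) (x : ℝ) :
    HasDerivAt (beta f) (betaDeriv f x) x := by
  have hF := (hf.integral_hasStrictDerivAt 0 x).hasDerivAt
  have hf₂ : Continuous fun z => z ^ 2 * f z := by fun_prop
  have hG := (hf₂.integral_hasStrictDerivAt 0 x).hasDerivAt
  have hH := hasDerivAt_setIntegral_Ioi (by fun_prop) hf₁ x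
  have hx := hasDerivAt_id' x
  have hx2 := hasDerivAt_pow 2 x
  refine ((((((hasDerivAt_const x ((∫ z in Ioi (0:ℝ), z * f z) ^ 2)).neg.add
    ((hF.const_mul 2).mul hG)).add (((hx.const_mul 4).mul hF).mul hH)).sub
    (hx2.div_const 4)).add (hH.pow 2)).add (hx2.mul (hF.pow 2))).congr_deriv ?_
  simp only [betaDeriv, Pi.mul_apply, Pi.pow_apply]
  push_cast
  ring

theorem betaDeriv_nonneg (hf : Continuous f) (hf_nonneg : ∀ x, 0 ≤ f x)
    (hf_anti : AntitoneOn f (Ici 0)) (hf_int : Integrable f) (hf₁ : Integrable fun z => z * f z)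
    (hf_half : ∫ z in Ioi 0, f z = 1 / 2) {x : ℝ} (hx : 0 ≤ x) : 0 ≤ betaDeriv f x := by
  set F := ∫ z in (0:ℝ)..x, f z
  set G := ∫ z in (0:ℝ)..x, z ^ 2 * f z
  set H := ∫ z in Ioi x, z * f z
  set p := ∫ z in Ioi x, f z
  have hpF : p = 1 / 2 - F := by
    rw [← hf_half, ← intervalIntegral.integral_interval_add_Ioi' (hf.intervalIntegrable 0 x)
      hf_int.integrableOn]
    ring
  have hxF : x * f x ≤ F := by
    simpa using intervalIntegral.integral_mono_on hx (intervalIntegrable_const (μ := volume))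
      (hf.intervalIntegrable 0 x) fun z hz => hf_anti hz.1 (hz.1.trans hz.2 : (0:ℝ) ≤ x) hz.2
  have hG : 0 ≤ G := intervalIntegral.integral_nonneg hx fun z _ => by
    have := hf_nonneg z; positivity
  have hH : 0 ≤ H := setIntegral_nonneg measurableSet_Ioi fun z hz =>
    mul_nonneg (hx.trans (le_of_lt hz)) (hf_nonneg z)
  have hmoment : ∫ z in Ioi x, (z - x) * f z = H - x * p := by
    simp_rw [sub_mul]
    rw [integral_sub hf₁.integrableOn (hf_int.integrableOn.const_mul x), integral_const_mul]
  have hxp : 0 ≤ H - x * p := hmoment ▸ setIntegral_nonneg measurableSet_Ioi fun z hz =>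
    mul_nonneg (sub_nonneg.2 (le_of_lt hz)) (hf_nonneg z)
  have htail : p ^ 2 ≤ 2 * f x * (H - x * p) := hmoment ▸
    sq_setIntegral_Ioi_le_of_antitoneOn (fun z _ => hf_nonneg z)
      (hf_anti.mono (Ici_subset_Ici.2 hx)) hf_int.integrableOn
      ((hf₁.sub (hf_int.const_mul x)).integrableOn.congr_fun
        (fun z _ => by simp only [Pi.sub_apply]; ring) measurableSet_Ioi)
  have key : x * p ^ 2 ≤ 2 * F * (H - x * p) := calc
    x * p ^ 2 ≤ x * (2 * f x * (H - x * p)) := mul_le_mul_of_nonneg_left htail hx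
    _ = 2 * (x * f x) * (H - x * p) := by ring
    _ ≤ 2 * F * (H - x * p) := by gcongr
  have hfG : 0 ≤ f x * G := mul_nonneg (hf_nonneg x) hG
  have hfH : 0 ≤ x * f x * H := mul_nonneg (mul_nonneg hx (hf_nonneg x)) hH
  have hβ' : betaDeriv f x
      = 2 * (2 * F * (H - x * p) - x * p ^ 2) + 2 * (f x * G) + 2 * (x * f x * H) := by
    simp only [betaDeriv, hpF]
    ring
  rw [hβ']
  linarith

end Beta

/-- With `β` as in the paper: `β 0 = 0`, for `x ≥ 0` the derivative of `β` is
`β′(x) = 4(∫₀ˣ f)(∫ₓ^∞ z f) − x/2 + 2x(∫₀ˣ f)² + 2 f x ∫₀ˣ z² f + 2x f x ∫ₓ^∞ z f`,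
and consequently `β x ≥ 0` for all `x ≥ 0`. -/
theorem beta_nonneg
    (f : ℝ → ℝ) (hf_cont : Continuous f) (hf_nonneg : ∀ x, 0 ≤ f x)
    (hf_total : ∫ z, f z = 1)
    (hf_symm : ∀ x, f (-x) = f x)
    (hf_mono : ∀ x y : ℝ, 0 ≤ x → x ≤ y → f y ≤ f x)
    (hmom : Integrable (fun z => z ^ 2 * f z))
    (β : ℝ → ℝ)
    (hβ : ∀ x : ℝ, β x
        = -(∫ z in Set.Ioi (0:ℝ), z * f z) ^ 2
          + 2 * (∫ z in (0:ℝ)..x, f z) * (∫ z in (0:ℝ)..x, z ^ 2 * f z)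
          + 4 * x * (∫ z in (0:ℝ)..x, f z) * (∫ z in Set.Ioi x, z * f z)
          - x ^ 2 / 4
          + (∫ z in Set.Ioi x, z * f z) ^ 2
          + x ^ 2 * (∫ z in (0:ℝ)..x, f z) ^ 2) :
    β 0 = 0
      ∧ (∀ x : ℝ, 0 ≤ x → HasDerivAt β
          (4 * (∫ z in (0:ℝ)..x, f z) * (∫ z in Set.Ioi x, z * f z)
            - x / 2 + 2 * x * (∫ z in (0:ℝ)..x, f z) ^ 2
            + 2 * f x * (∫ z in (0:ℝ)..x, z ^ 2 * f z)
            + 2 * x * f x * (∫ z in Set.Ioi x, z * f z)) x)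
      ∧ ∀ x : ℝ, 0 ≤ x → 0 ≤ β x := by
  obtain rfl : β = beta f := funext hβ
  have hf_int : Integrable f := .of_integral_ne_zero (by simp [hf_total])
  have hf₁ := integrable_mul_of_integrable_sq_mul hf_int hmom
  have hf_half : ∫ z in Ioi 0, f z = 1 / 2 := by
    rw [Function.Even.setIntegral_Ioi_zero hf_symm hf_int, hf_total]
  have hf_anti : AntitoneOn f (Ici 0) := fun x hx y _ hxy => hf_mono x y hx hxy
  have hderiv := hasDerivAt_beta hf_cont hf₁
  refine ⟨beta_zero, fun x _ => hderiv x, fun x hx => ?_⟩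
  have hmono : MonotoneOn (beta f) (Ici 0) :=
    monotoneOn_of_hasDerivWithinAt_nonneg (convex_Ici 0)
      (fun y _ => (hderiv y).continuousAt.continuousWithinAt)
      (fun y _ => (hderiv y).hasDerivWithinAt) fun y hy =>
      betaDeriv_nonneg hf_cont hf_nonneg hf_anti hf_int hf₁ hf_half (interior_subset hy)
  simpa [beta_zero] using hmono self_mem_Ici hx hx
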